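/- Let (a,b,c) be a triple of positive real numbers with a < b < c and b − a < c₀ < a, where c₀ := c − ⌊c/b⌋·b. Then t ∈ S_{a,b,c} if and only if for every integer n ≥ 0, neither (R_{a,b,c})ⁿ(t) nor (R̃_{a,b,c})ⁿ(t) belongs to the union ([c₀+a−b, c₀) + aℤ) ∪ ([c−c₀, c+b−c₀−a) + aℤ) of the black holes of R_{a,b,c} and R̃_{a,b,c}. -/

import Mathlib

open MeasureTheory Set

/- Indicator function of the interval `[0, c)`. -/
open Classical in
noncomputable def chiIco (c x : ℝ) : ℝ := if 0 ≤ x ∧ x < c then 1 else 0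

/-- The row `μ = j·a` of the infinite matrix `M_{a,b,c}(t)` applied to the vector
`z : bℤ → ℝ` (indexed by `k : ℤ`, with `λ = k·b`):
`(M_{a,b,c}(t)z)(μ) = Σ_{λ∈bℤ} χ_{[0,c)}(t − μ + λ)·z(λ)`. -/
noncomputable def Mrow (a b c t : ℝ) (z : ℤ → ℝ) (j : ℤ) : ℝ :=
  ∑' k : ℤ, chiIco c (t - (j : ℝ) * a + (k : ℝ) * b) * z k

/-- `D_{a,b,c} = {t : M_{a,b,c}(t)x = 2 for some binary x with x(0) = 1}`. -/
def Dset (a b c : ℝ) : Set ℝ :=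
  {t : ℝ | ∃ x : ℤ → ℝ, (∀ k, x k = 0 ∨ x k = 1) ∧ x 0 = 1 ∧ ∀ j : ℤ, Mrow a b c t x j = 2}

/-- `S_{a,b,c} = {t : M_{a,b,c}(t)x = 1 for some binary x with x(0) = 1}`. -/
def Sset (a b c : ℝ) : Set ℝ :=
  {t : ℝ | ∃ x : ℤ → ℝ, (∀ k, x k = 0 ∨ x k = 1) ∧ x 0 = 1 ∧ ∀ j : ℤ, Mrow a b c t x j = 1}

/-- The periodic set `X + aℤ = {x + ka : x ∈ X, k ∈ ℤ}`. -/
def perSet (a : ℝ) (X : Set ℝ) : Set ℝ := {t : ℝ | ∃ k : ℤ, t - (k : ℝ) * a ∈ X}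

/- The piecewise linear transformation `R_{a,b,c}`. -/
open Classical in
noncomputable def Rmap (a b c : ℝ) (t : ℝ) : ℝ :=
  if t ∈ perSet a (Set.Ico 0 ((c - (⌊c / b⌋ : ℝ) * b) + a - b)) then
    t + (⌊c / b⌋ : ℝ) * b + b
  else if t ∈ perSet a (Set.Ico ((c - (⌊c / b⌋ : ℝ) * b) + a - b) (c - (⌊c / b⌋ : ℝ) * b)) then
    t
  else t + (⌊c / b⌋ : ℝ) * b

/- The piecewise linear transformation `R̃_{a,b,c}`. -/
open Classical in
noncomputable def Rtil (a b c : ℝ) (t : ℝ) : ℝ :=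
  if t ∈ perSet a (Set.Ico (c - a) (c - (c - (⌊c / b⌋ : ℝ) * b))) then
    t - (⌊c / b⌋ : ℝ) * b
  else if t ∈ perSet a
      (Set.Ico (c - (c - (⌊c / b⌋ : ℝ) * b)) (c + b - (c - (⌊c / b⌋ : ℝ) * b) - a)) then
    t
  else t - (⌊c / b⌋ : ℝ) * b - b


/-! Row `j` of `M_{a,b,c}(t)x = 1` says that the support `P` of `x` meets the window
`{k : 0 ≤ t − ja + kb < c}`, a block of `q` or `q + 1` consecutive integers (`q = ⌊c/b⌋`),
exactly once. Comparing the windows of two consecutive rows shows that for `k ∈ P` the point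
`t + kb` avoids both black holes, and that `k + q + 1` resp. `k + q` is again in `P` when
`t + kb` lies in `[0, c₀+a−b) + aℤ` resp. `[c₀, a) + aℤ`: so `R` and `R̃` move along `t + Pb`.
Conversely, if both orbits avoid the black holes, `R̃` inverts `R` along them, and the
indices of the two-sided orbit of `t` form a set meeting every window exactly once. -/

open Function

/-- The support `{k : λ = kb}` of row `μ = ja` of `M_{a,b,c}(t)`. -/
def window (a b c t : ℝ) (j : ℤ) : Set ℤ :=
  {k | 0 ≤ t - j * a + k * b ∧ t - j * a + k * b < c}

def MeetsWindowsOnce (a b c t : ℝ) (P : Set ℤ) : Prop :=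
  ∀ j, ∃! k, k ∈ window a b c t j ∧ k ∈ P

lemma Set.ncard_eq_one_iff_existsUnique {α : Type*} {s : Set α} :
    s.ncard = 1 ↔ ∃! x, x ∈ s := by
  simp only [Set.ncard_eq_one, Set.eq_singleton_iff_unique_mem, ExistsUnique]

lemma Mrow_eq_ncard {a b c t : ℝ} {x : ℤ → ℝ} (hx : ∀ k, x k = 0 ∨ x k = 1) (j : ℤ) :
    Mrow a b c t x j = (window a b c t j ∩ {k | x k = 1}).ncard := by
  have hterm : (fun k : ℤ => chiIco c (t - j * a + k * b) * x k) =
      (window a b c t j ∩ {k | x k = 1}).indicator 1 := by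
    funext k
    rcases hx k with h | h <;> by_cases hw : k ∈ window a b c t j <;>
      simp_all [chiIco, window]
  rw [Mrow, hterm, ← tsum_subtype]
  simp only [Pi.one_apply, tsum_const, Nat.card_coe_set_eq, nsmul_eq_mul, mul_one]

lemma mem_Sset_iff {a b c t : ℝ} :
    t ∈ Sset a b c ↔ ∃ P : Set ℤ, 0 ∈ P ∧ MeetsWindowsOnce a b c t P := by
  constructor
  · rintro ⟨x, hx, hx0, hrow⟩
    refine ⟨{k | x k = 1}, hx0, fun j => Set.ncard_eq_one_iff_existsUnique.mp ?_⟩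
    exact_mod_cast (Mrow_eq_ncard hx j).symm.trans (hrow j)
  · rintro ⟨P, h0, hP⟩
    classical
    have hx : ∀ k, P.indicator (1 : ℤ → ℝ) k = 0 ∨ P.indicator (1 : ℤ → ℝ) k = 1 := fun k => by
      by_cases hk : k ∈ P <;> simp [hk]
    have hP' : {k | P.indicator (1 : ℤ → ℝ) k = 1} = P := by
      ext k; by_cases hk : k ∈ P <;> simp [hk]
    refine ⟨P.indicator 1, hx, by simp [h0], fun j => ?_⟩
    rw [Mrow_eq_ncard hx, hP',
      (Set.ncard_eq_one_iff_existsUnique (s := window a b c t j ∩ P)).mpr (hP j), Nat.cast_one]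

lemma add_int_mul_nonneg_iff {u b : ℝ} (hb : 0 < b) (hu : 0 ≤ u) (hub : u < b) (d : ℤ) :
    0 ≤ u + d * b ↔ 0 ≤ d := by
  constructor
  · intro h
    have : ((-1 : ℤ) : ℝ) < d := lt_of_mul_lt_mul_right (by push_cast; linarith) hb.le
    have := Int.cast_lt.mp this
    omega
  · intro h
    have : (0 : ℝ) ≤ d := by exact_mod_cast h
    positivity

lemma add_int_mul_lt_add_int_mul_iff {u v b : ℝ} (hb : 0 < b) (huv : u < v) (hvu : v ≤ u + b)
    (d n : ℤ) : u + d * b < v + n * b ↔ d ≤ n := by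
  constructor
  · intro h
    have : (d : ℝ) < ((n + 1 : ℤ) : ℝ) := lt_of_mul_lt_mul_right (by push_cast; linarith) hb.le
    have := Int.cast_lt.mp this
    omega
  · intro h
    have : (d : ℝ) ≤ n := by exact_mod_cast h
    nlinarith

section Window

variable {a b c c₀ t : ℝ} {q j k : ℤ}

lemma window_eq_Icc_of_lt (hb : 0 < b) (hc : c = q * b + c₀) (hc₀ : c₀ ≤ b)
    (hk : 0 ≤ t - j * a + k * b) (hk' : t - j * a + k * b < c₀) :
    window a b c t j = Icc k (k + q) := by
  ext m
  have e : t - j * a + m * b = (t - j * a + k * b) + ((m - k : ℤ) : ℝ) * b := by push_cast; ring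
  rw [window, mem_ofPred_eq, e, hc, add_comm _ c₀, add_int_mul_nonneg_iff hb hk (by linarith),
    add_int_mul_lt_add_int_mul_iff hb hk' (by linarith), mem_Icc]
  omega

lemma window_eq_Icc_of_ge (hb : 0 < b) (hc : c = q * b + c₀) (hc₀ : 0 ≤ c₀)
    (hk : c₀ ≤ t - j * a + k * b) (hk' : t - j * a + k * b < b) :
    window a b c t j = Icc k (k + (q - 1)) := by
  ext m
  have e : t - j * a + m * b = (t - j * a + k * b) + ((m - k : ℤ) : ℝ) * b := by push_cast; ring
  have hc' : c = (c₀ + b) + ((q - 1 : ℤ) : ℝ) * b := by push_cast; linarith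
  rw [window, mem_ofPred_eq, e, hc', add_int_mul_nonneg_iff hb (by linarith) hk',
    add_int_mul_lt_add_int_mul_iff hb (by linarith) (by linarith), mem_Icc]
  omega

end Window

section PerSet

variable {a : ℝ}

lemma mem_perSet_Ico_cover (ha : 0 < a) {l m₁ m₂ r : ℝ} (hr : l + a = r) (y : ℝ) :
    y ∈ perSet a (Ico l m₁) ∨ y ∈ perSet a (Ico m₁ m₂) ∨ y ∈ perSet a (Ico m₂ r) := by
  obtain ⟨k, hk, -⟩ := existsUnique_sub_zsmul_mem_Ico ha y l
  rw [zsmul_eq_mul, hr, mem_Ico] at hk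
  rcases lt_or_ge (y - k * a) m₁ with h | h
  · exact Or.inl ⟨k, hk.1, h⟩
  rcases lt_or_ge (y - k * a) m₂ with h' | h'
  · exact Or.inr (Or.inl ⟨k, h, h'⟩)
  · exact Or.inr (Or.inr ⟨k, h', hk.2⟩)

lemma notMem_perSet_Ico_of_mem {y l₁ r₁ l₂ r₂ : ℝ} (h : y ∈ perSet a (Ico l₁ r₁))
    (h₁ : r₁ ≤ l₂) (h₂ : r₂ ≤ l₁ + a) : y ∉ perSet a (Ico l₂ r₂) := by
  rintro ⟨k₂, hk₂, hk₂'⟩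
  obtain ⟨k₁, hk₁, hk₁'⟩ := h
  -- `(k₁ - k₂) a` would lie strictly between `0` and `a`
  have ha : 0 < a := by linarith
  have hpos : ((0 : ℤ) : ℝ) < ((k₁ - k₂ : ℤ) : ℝ) :=
    lt_of_mul_lt_mul_right (by push_cast; linarith) ha.le
  have hlt : ((k₁ - k₂ : ℤ) : ℝ) < ((1 : ℤ) : ℝ) :=
    lt_of_mul_lt_mul_right (by push_cast; linarith) ha.le
  have := Int.cast_lt.mp hpos
  have := Int.cast_lt.mp hlt
  omega

end PerSet

section Transversal

variable {α : Type*} {P I J : Set α} {k l : α}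

lemma mem_of_existsUnique_of_mem (hI : ∃! m, m ∈ I ∧ m ∈ P) (hJ : ∃! m, m ∈ J ∧ m ∈ P)
    (hkI : k ∈ I) (hkJ : k ∉ J) (hJI : ∀ m ∈ J, m ∉ I → m = l) (hk : k ∈ P) : l ∈ P := by
  obtain ⟨m, ⟨hmJ, hmP⟩, -⟩ := hJ
  by_cases hmI : m ∈ I
  · exact absurd (hI.unique ⟨hkI, hk⟩ ⟨hmI, hmP⟩ ▸ hmJ) hkJ
  · exact hJI m hmJ hmI ▸ hmP

lemma notMem_of_existsUnique_of_subset (hI : ∃! m, m ∈ I ∧ m ∈ P)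
    (hJ : ∃! m, m ∈ J ∧ m ∈ P) (hIJ : I ⊆ J) (hkJ : k ∈ J) (hkI : k ∉ I) : k ∉ P := by
  intro hk
  obtain ⟨m, ⟨hmI, hmP⟩, -⟩ := hI
  exact hkI (hJ.unique ⟨hkJ, hk⟩ ⟨hIJ hmI, hmP⟩ ▸ hmI)

lemma mem_iff_mem_of_existsUnique_Icc {P : Set ℤ} {k n : ℤ}
    (hI : ∃! m, m ∈ Icc k (k + n) ∧ m ∈ P) (hJ : ∃! m, m ∈ Icc (k + 1) (k + 1 + n) ∧ m ∈ P) :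
    k ∈ P ↔ k + 1 + n ∈ P := by
  have hn : 0 ≤ n := by
    obtain ⟨m, ⟨hm, -⟩, -⟩ := hI
    rw [mem_Icc] at hm
    omega
  constructor
  · refine mem_of_existsUnique_of_mem hI hJ ?_ ?_ ?_ <;> simp only [mem_Icc] <;> omega
  · refine mem_of_existsUnique_of_mem hJ hI ?_ ?_ ?_ <;> simp only [mem_Icc] <;> omega

end Transversal

def blackHoleR (a b c₀ : ℝ) : Set ℝ := perSet a (Ico (c₀ + a - b) c₀)

def blackHoleRtil (a b c c₀ : ℝ) : Set ℝ := perSet a (Ico (c - c₀) (c + b - c₀ - a))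

section Dynamics

variable {a b c c₀ t y : ℝ} {q : ℤ}

lemma sub_mul_mem_perSet_Ico_c₀ (hc : c = q * b + c₀) (hy : y ∈ perSet a (Ico (c - a) (c - c₀))) :
    y - q * b ∈ perSet a (Ico c₀ a) := by
  obtain ⟨j, hj, hj'⟩ := hy
  exact ⟨j - 1, by push_cast; linarith, by push_cast; linarith⟩

lemma sub_mul_mem_perSet_Ico_zero (hc : c = q * b + c₀)
    (hy : y ∈ perSet a (Ico (c + b - c₀ - a) c)) :
    y - (q + 1) * b ∈ perSet a (Ico 0 (c₀ + a - b)) := by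
  obtain ⟨j, hj, hj'⟩ := hy
  exact ⟨j - 1, by push_cast; linarith, by push_cast; linarith⟩

lemma Rmap_eq_of_mem_left (hq : ⌊c / b⌋ = q) (hc : c = q * b + c₀)
    (hy : y ∈ perSet a (Ico 0 (c₀ + a - b))) : Rmap a b c y = y + (q + 1) * b := by
  have e : c - (⌊c / b⌋ : ℝ) * b = c₀ := by rw [hq]; linarith
  rw [Rmap, e, if_pos hy, hq]
  ring

lemma Rmap_eq_of_mem_right (hab : a < b) (h1 : b - a < c₀) (hq : ⌊c / b⌋ = q)
    (hc : c = q * b + c₀) (hy : y ∈ perSet a (Ico c₀ a)) : Rmap a b c y = y + q * b := by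
  have e : c - (⌊c / b⌋ : ℝ) * b = c₀ := by rw [hq]; linarith
  rw [Rmap, e, if_neg fun h => notMem_perSet_Ico_of_mem h (by linarith) (by linarith) hy,
    if_neg fun h => notMem_perSet_Ico_of_mem h le_rfl (by linarith) hy, hq]

lemma Rtil_eq_of_mem_left (hq : ⌊c / b⌋ = q) (hc : c = q * b + c₀)
    (hy : y ∈ perSet a (Ico (c - a) (c - c₀))) : Rtil a b c y = y - q * b := by
  have e : c - (⌊c / b⌋ : ℝ) * b = c₀ := by rw [hq]; linarith
  rw [Rtil, e, if_pos hy, hq]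

lemma Rtil_eq_of_mem_right (hab : a < b) (h2 : c₀ < a) (hq : ⌊c / b⌋ = q)
    (hc : c = q * b + c₀) (hy : y ∈ perSet a (Ico (c + b - c₀ - a) c)) :
    Rtil a b c y = y - (q + 1) * b := by
  have e : c - (⌊c / b⌋ : ℝ) * b = c₀ := by rw [hq]; linarith
  rw [Rtil, e, if_neg fun h => notMem_perSet_Ico_of_mem h (by linarith) (by linarith) hy,
    if_neg fun h => notMem_perSet_Ico_of_mem h le_rfl (by linarith) hy, hq]
  ring

lemma Rmap_Rtil (hab : a < b) (h1 : b - a < c₀) (h2 : c₀ < a) (hq : ⌊c / b⌋ = q)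
    (hc : c = q * b + c₀) (hy : y ∉ blackHoleRtil a b c c₀) : Rmap a b c (Rtil a b c y) = y := by
  rcases mem_perSet_Ico_cover (by linarith) (sub_add_cancel c a) y with h | h | h
  · rw [Rtil_eq_of_mem_left hq hc h,
      Rmap_eq_of_mem_right hab h1 hq hc (sub_mul_mem_perSet_Ico_c₀ hc h)]
    ring
  · exact absurd h hy
  · rw [Rtil_eq_of_mem_right hab h2 hq hc h,
      Rmap_eq_of_mem_left hq hc (sub_mul_mem_perSet_Ico_zero hc h)]
    ring

end Dynamics

section Forward

variable {a b c c₀ t : ℝ} {q k : ℤ} {P : Set ℤ}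

lemma mem_iff_add_add_one_mem (hab : a < b) (h1 : b - a < c₀) (h2 : c₀ < a) (hc : c = q * b + c₀)
    (hP : MeetsWindowsOnce a b c t P)
    (hk : t + k * b ∈ perSet a (Ico 0 (c₀ + a - b))) : k ∈ P ↔ k + q + 1 ∈ P := by
  obtain ⟨j, hj, hj'⟩ := hk
  have hb : 0 < b := by linarith
  have hI := hP j
  have hJ := hP (j + 1)
  rw [window_eq_Icc_of_lt (k := k) hb hc (by linarith) (by linarith) (by linarith)] at hI
  rw [window_eq_Icc_of_lt (k := k + 1) hb hc (by linarith) (by push_cast; linarith)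
    (by push_cast; linarith)] at hJ
  rw [add_right_comm]
  exact mem_iff_mem_of_existsUnique_Icc hI hJ

lemma mem_iff_add_mem (hab : a < b) (h1 : b - a < c₀) (h2 : c₀ < a) (hc : c = q * b + c₀)
    (hP : MeetsWindowsOnce a b c t P)
    (hk : t + k * b ∈ perSet a (Ico c₀ a)) : k ∈ P ↔ k + q ∈ P := by
  obtain ⟨j, hj, hj'⟩ := hk
  have hb : 0 < b := by linarith
  have hI := hP j
  have hJ := hP (j + 1)
  rw [window_eq_Icc_of_ge (k := k) hb hc (by linarith) (by linarith) (by linarith)] at hI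
  rw [window_eq_Icc_of_ge (k := k + 1) hb hc (by linarith) (by push_cast; linarith)
    (by push_cast; linarith)] at hJ
  rw [show k + q = k + 1 + (q - 1) by ring]
  exact mem_iff_mem_of_existsUnique_Icc hI hJ

lemma add_mul_notMem_blackHoleR (hab : a < b) (h1 : b - a < c₀) (h2 : c₀ < a) (hc : c = q * b + c₀)
    (hq : 0 ≤ q) (hP : MeetsWindowsOnce a b c t P) (hk : k ∈ P) :
    t + k * b ∉ blackHoleR a b c₀ := by
  rintro ⟨j, hj, hj'⟩
  have hb : 0 < b := by linarith
  have hJ := hP j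
  have hI := hP (j + 1)
  rw [window_eq_Icc_of_lt (k := k) hb hc (by linarith) (by linarith) (by linarith)] at hJ
  rw [window_eq_Icc_of_ge (k := k + 1) hb hc (by linarith) (by push_cast; linarith)
    (by push_cast; linarith)] at hI
  exact notMem_of_existsUnique_of_subset hI hJ (Icc_subset_Icc (by omega) (by omega))
    (by simp only [mem_Icc]; omega) (by simp only [mem_Icc]; omega) hk

lemma add_mul_notMem_blackHoleRtil (hab : a < b) (h1 : b - a < c₀) (h2 : c₀ < a)
    (hc : c = q * b + c₀) (hq : 0 ≤ q) (hP : MeetsWindowsOnce a b c t P) (hk : k ∈ P) :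
    t + k * b ∉ blackHoleRtil a b c c₀ := by
  rintro ⟨j, hj, hj'⟩
  have hb : 0 < b := by linarith
  have hJ := hP j
  have hI := hP (j - 1)
  rw [window_eq_Icc_of_lt (k := k - q) hb hc (by linarith) (by push_cast; linarith)
    (by push_cast; linarith)] at hJ
  rw [window_eq_Icc_of_ge (k := k - q) hb hc (by linarith) (by push_cast; linarith)
    (by push_cast; linarith)] at hI
  exact notMem_of_existsUnique_of_subset hI hJ (Icc_subset_Icc (by omega) (by omega))
    (by simp only [mem_Icc]; omega) (by simp only [mem_Icc]; omega) hk

lemma add_mul_notMem_blackHoles (hab : a < b) (h1 : b - a < c₀) (h2 : c₀ < a)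
    (hc : c = q * b + c₀) (hq : 0 ≤ q) (hP : MeetsWindowsOnce a b c t P)
    (hk : k ∈ P) : t + k * b ∉ blackHoleR a b c₀ ∪ blackHoleRtil a b c c₀ :=
  not_or_intro (add_mul_notMem_blackHoleR hab h1 h2 hc hq hP hk)
    (add_mul_notMem_blackHoleRtil hab h1 h2 hc hq hP hk)

lemma exists_mem_iterate_Rmap (hab : a < b) (h1 : b - a < c₀) (h2 : c₀ < a)
    (hq : ⌊c / b⌋ = q) (hc : c = q * b + c₀) (hq0 : 0 ≤ q)
    (hP : MeetsWindowsOnce a b c t P) (h0 : 0 ∈ P) (n : ℕ) :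
    ∃ k ∈ P, (Rmap a b c)^[n] t = t + k * b := by
  induction n with
  | zero => exact ⟨0, h0, by simp⟩
  | succ n ih =>
    obtain ⟨k, hk, hn⟩ := ih
    rw [iterate_succ_apply', hn]
    rcases mem_perSet_Ico_cover (by linarith) (zero_add a) (t + k * b) with h | h | h
    · refine ⟨k + q + 1, (mem_iff_add_add_one_mem hab h1 h2 hc hP h).1 hk, ?_⟩
      rw [Rmap_eq_of_mem_left hq hc h]
      push_cast
      ring
    · exact absurd h (add_mul_notMem_blackHoleR hab h1 h2 hc hq0 hP hk)
    · refine ⟨k + q, (mem_iff_add_mem hab h1 h2 hc hP h).1 hk, ?_⟩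
      rw [Rmap_eq_of_mem_right hab h1 hq hc h]
      push_cast
      ring

lemma exists_mem_iterate_Rtil (hab : a < b) (h1 : b - a < c₀) (h2 : c₀ < a)
    (hq : ⌊c / b⌋ = q) (hc : c = q * b + c₀) (hq0 : 0 ≤ q)
    (hP : MeetsWindowsOnce a b c t P) (h0 : 0 ∈ P) (n : ℕ) :
    ∃ k ∈ P, (Rtil a b c)^[n] t = t + k * b := by
  induction n with
  | zero => exact ⟨0, h0, by simp⟩
  | succ n ih =>
    obtain ⟨k, hk, hn⟩ := ih
    rw [iterate_succ_apply', hn]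
    rcases mem_perSet_Ico_cover (by linarith) (sub_add_cancel c a) (t + k * b) with h | h | h
    · have h' := sub_mul_mem_perSet_Ico_c₀ hc h
      rw [show t + k * b - q * b = t + ((k - q : ℤ) : ℝ) * b by push_cast; ring] at h'
      refine ⟨k - q, (mem_iff_add_mem hab h1 h2 hc hP h').2 (by rwa [sub_add_cancel]), ?_⟩
      rw [Rtil_eq_of_mem_left hq hc h]
      push_cast
      ring
    · exact absurd h (add_mul_notMem_blackHoleRtil hab h1 h2 hc hq0 hP hk)
    · have h' := sub_mul_mem_perSet_Ico_zero hc h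
      rw [show t + k * b - (q + 1) * b = t + ((k - q - 1 : ℤ) : ℝ) * b by push_cast; ring] at h'
      refine ⟨k - q - 1, (mem_iff_add_add_one_mem hab h1 h2 hc hP h').2
        (by rwa [show k - q - 1 + q + 1 = k by ring]), ?_⟩
      rw [Rtil_eq_of_mem_right hab h2 hq hc h]
      push_cast
      ring

end Forward

section TwoSidedOrbit

variable {α : Type*} {f g : α → α} {x : α}

def twoSidedOrbit (f g : α → α) (x : α) (i : ℤ) : α :=
  if 0 ≤ i then f^[i.toNat] x else g^[(-i).toNat] x

lemma twoSidedOrbit_natCast (n : ℕ) : twoSidedOrbit f g x n = f^[n] x := by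
  simp [twoSidedOrbit]

lemma twoSidedOrbit_zero : twoSidedOrbit f g x 0 = x :=
  twoSidedOrbit_natCast 0

lemma twoSidedOrbit_neg_natCast (n : ℕ) : twoSidedOrbit f g x (-n) = g^[n] x := by
  rcases n with _ | n
  · simp [twoSidedOrbit]
  · rw [twoSidedOrbit, if_neg (by omega), neg_neg, Int.toNat_natCast]

lemma twoSidedOrbit_add_one (h : ∀ n, f (g^[n + 1] x) = g^[n] x) (i : ℤ) :
    twoSidedOrbit f g x (i + 1) = f (twoSidedOrbit f g x i) := by
  obtain ⟨n, rfl | rfl⟩ := Int.eq_nat_or_neg i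
  · rw [← Nat.cast_succ, twoSidedOrbit_natCast, twoSidedOrbit_natCast, iterate_succ_apply']
  · rcases n with _ | n
    · simp [twoSidedOrbit]
    · rw [show -((n + 1 : ℕ) : ℤ) + 1 = -(n : ℤ) by push_cast; ring, twoSidedOrbit_neg_natCast,
        twoSidedOrbit_neg_natCast, h]

end TwoSidedOrbit

lemma exists_iterate_eq_add_int_mul {f : ℝ → ℝ} {b : ℝ} (hf : ∀ y, ∃ k : ℤ, f y = y + k * b)
    (n : ℕ) (y : ℝ) : ∃ k : ℤ, f^[n] y = y + k * b := by
  induction n with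
  | zero => exact ⟨0, by simp⟩
  | succ n ih =>
    obtain ⟨k, hk⟩ := ih
    obtain ⟨k', hk'⟩ := hf (f^[n] y)
    exact ⟨k + k', by rw [iterate_succ_apply', hk', hk]; push_cast; ring⟩

lemma exists_twoSidedOrbit_eq_add_int_mul {f g : ℝ → ℝ} {b : ℝ}
    (hf : ∀ y, ∃ k : ℤ, f y = y + k * b) (hg : ∀ y, ∃ k : ℤ, g y = y + k * b) (x : ℝ) (i : ℤ) :
    ∃ k : ℤ, twoSidedOrbit f g x i = x + k * b := by
  obtain ⟨n, rfl | rfl⟩ := Int.eq_nat_or_neg i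
  · rw [twoSidedOrbit_natCast]
    exact exists_iterate_eq_add_int_mul hf n x
  · rw [twoSidedOrbit_neg_natCast]
    exact exists_iterate_eq_add_int_mul hg n x

lemma Rmap_eq_add_int_mul (a b c y : ℝ) : ∃ k : ℤ, Rmap a b c y = y + k * b := by
  unfold Rmap
  split_ifs
  · exact ⟨⌊c / b⌋ + 1, by push_cast; ring⟩
  · exact ⟨0, by simp⟩
  · exact ⟨⌊c / b⌋, rfl⟩

lemma Rtil_eq_add_int_mul (a b c y : ℝ) : ∃ k : ℤ, Rtil a b c y = y + k * b := by
  unfold Rtil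
  split_ifs
  · exact ⟨-⌊c / b⌋, by push_cast; ring⟩
  · exact ⟨0, by simp⟩
  · exact ⟨-⌊c / b⌋ - 1, by push_cast; ring⟩

/-- `k'` is the index of `R_{a,b,c}(t + kb) = t + k'b`, and `t + kb` is not in the black hole
of `R_{a,b,c}`. -/
def OrbitStep (a b c₀ t : ℝ) (q k k' : ℤ) : Prop :=
  (t + k * b ∈ perSet a (Ico 0 (c₀ + a - b)) ∧ k' = k + q + 1) ∨
    (t + k * b ∈ perSet a (Ico c₀ a) ∧ k' = k + q)

lemma OrbitStep.add_le {a b c₀ t : ℝ} {q k k' : ℤ} (h : OrbitStep a b c₀ t q k k') :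
    k + q ≤ k' := by
  rcases h with ⟨-, rfl⟩ | ⟨-, rfl⟩ <;> omega

lemma OrbitStep.le_add_add_one {a b c₀ t : ℝ} {q k k' : ℤ} (h : OrbitStep a b c₀ t q k k') :
    k' ≤ k + q + 1 := by
  rcases h with ⟨-, rfl⟩ | ⟨-, rfl⟩ <;> omega

lemma exists_orbitStep_seq {a b c c₀ t : ℝ} {q : ℤ} (hab : a < b) (h1 : b - a < c₀)
    (h2 : c₀ < a) (hq : ⌊c / b⌋ = q) (hc : c = q * b + c₀)
    (h : ∀ n : ℕ, (Rmap a b c)^[n] t ∉ blackHoleR a b c₀ ∪ blackHoleRtil a b c c₀ ∧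
      (Rtil a b c)^[n] t ∉ blackHoleR a b c₀ ∪ blackHoleRtil a b c c₀) :
    ∃ ζ : ℤ → ℤ, ζ 0 = 0 ∧ ∀ i, OrbitStep a b c₀ t q (ζ i) (ζ (i + 1)) := by
  have hb : 0 < b := by linarith
  choose ζ hζ using exists_twoSidedOrbit_eq_add_int_mul (Rmap_eq_add_int_mul a b c)
    (Rtil_eq_add_int_mul a b c) t
  have hsucc : ∀ i, t + ζ (i + 1) * b = Rmap a b c (t + ζ i * b) := fun i => by
    rw [← hζ, ← hζ]
    refine twoSidedOrbit_add_one (fun n => ?_) i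
    rw [iterate_succ_apply']
    exact Rmap_Rtil hab h1 h2 hq hc fun hn => (h n).2 (Or.inr hn)
  have hhole : ∀ i, t + ζ i * b ∉ blackHoleR a b c₀ := fun i => by
    rw [← hζ]
    obtain ⟨n, rfl | rfl⟩ := Int.eq_nat_or_neg i
    · rw [twoSidedOrbit_natCast]
      exact fun hn => (h n).1 (Or.inl hn)
    · rw [twoSidedOrbit_neg_natCast]
      exact fun hn => (h n).2 (Or.inl hn)
  refine ⟨ζ, ?_, fun i => ?_⟩
  · have h0 := hζ 0
    rw [twoSidedOrbit_zero] at h0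
    exact_mod_cast (mul_eq_zero.mp (by linarith : (ζ 0 : ℝ) * b = 0)).resolve_right hb.ne'
  · have hi := hsucc i
    rcases mem_perSet_Ico_cover (by linarith) (zero_add a) (t + ζ i * b) with hy | hy | hy
    · rw [Rmap_eq_of_mem_left hq hc hy] at hi
      refine Or.inl ⟨hy, ?_⟩
      exact_mod_cast mul_right_cancel₀ hb.ne'
        (by push_cast; linarith : ((ζ (i + 1) : ℤ) : ℝ) * b = ((ζ i + q + 1 : ℤ) : ℝ) * b)
    · exact absurd hy (hhole i)
    · rw [Rmap_eq_of_mem_right hab h1 hq hc hy] at hi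
      refine Or.inr ⟨hy, ?_⟩
      exact_mod_cast mul_right_cancel₀ hb.ne'
        (by push_cast; linarith : ((ζ (i + 1) : ℤ) : ℝ) * b = ((ζ i + q : ℤ) : ℝ) * b)

lemma StrictMono.exists_le_lt_add_one {f : ℤ → ℤ} (hf : StrictMono f) (M : ℤ) :
    ∃ i, f i ≤ M ∧ M < f (i + 1) := by
  have hg : Monotone fun i => f i - i :=
    monotone_int_of_le_succ fun i => by have := hf (lt_add_one i); omega
  have hM := le_abs_self (M - f 0)
  have hM' := neg_abs_le (M - f 0)
  obtain ⟨i, hi, hmax⟩ := Int.exists_greatest_of_bdd (P := fun i => f i ≤ M)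
    ⟨|M - f 0|, fun i hi => by
      by_contra hlt
      have := hg (show 0 ≤ i by omega)
      simp only at this
      omega⟩
    ⟨-|M - f 0|, by
      have := hg (show -|M - f 0| ≤ 0 by omega)
      simp only at this
      omega⟩
  exact ⟨i, hi, lt_of_not_ge fun h => by have := hmax (i + 1) h; omega⟩

section Count

variable {a b c c₀ t : ℝ} {q j k₀ : ℤ} {ζ : ℤ → ℤ}

lemma existsUnique_mem_window_range_of_lt (hb : 0 < b) (hc : c = q * b + c₀) (hc₀ : c₀ ≤ b)
    (hζ : ∀ i, OrbitStep a b c₀ t q (ζ i) (ζ (i + 1))) (hmono : StrictMono ζ)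
    (hk : 0 ≤ t - j * a + k₀ * b) (hk' : t - j * a + k₀ * b < c₀) :
    ∃! k, k ∈ window a b c t j ∧ k ∈ range ζ := by
  rw [window_eq_Icc_of_lt hb hc hc₀ hk hk']
  obtain ⟨i, hi, hi'⟩ := hmono.exists_le_lt_add_one (k₀ + q)
  have := (hζ i).le_add_add_one
  refine ⟨ζ i, ⟨⟨by omega, hi⟩, i, rfl⟩, ?_⟩
  rintro _ ⟨hm, i', rfl⟩
  rw [mem_Icc] at hm
  rcases lt_trichotomy i' i with h | rfl | h
  · have := hmono.monotone (show i' + 1 ≤ i by omega)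
    -- two orbit points in a window of `q + 1` indices are `k₀` and `k₀ + q`, and the step
    -- `+ q` from `k₀` is excluded because `t + k₀ b` lies in `[0, c₀) + aℤ`
    rcases hζ i' with ⟨-, hs⟩ | ⟨hs, hs'⟩
    · omega
    · rw [show ζ i' = k₀ by omega] at hs
      exact absurd hs (notMem_perSet_Ico_of_mem (l₁ := 0) (r₁ := c₀)
        ⟨j, by linarith, by linarith⟩ le_rfl (by linarith))
  · rfl
  · have := hmono.monotone (show i + 1 ≤ i' by omega)
    omega

lemma existsUnique_mem_window_range_of_ge (hab : a < b) (h1 : b - a < c₀) (hc : c = q * b + c₀)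
    (hζ : ∀ i, OrbitStep a b c₀ t q (ζ i) (ζ (i + 1))) (hmono : StrictMono ζ)
    (hk : c₀ ≤ t - j * a + k₀ * b) (hk' : t - j * a + k₀ * b < b) :
    ∃! k, k ∈ window a b c t j ∧ k ∈ range ζ := by
  rw [window_eq_Icc_of_ge (by linarith) hc (by linarith) hk hk']
  obtain ⟨i, hi, hi'⟩ := hmono.exists_le_lt_add_one (k₀ + (q - 1))
  have hlo : k₀ ≤ ζ i := by
    by_contra hlt
    -- otherwise `ζ i = k₀ - 1` with a step `+ (q + 1)`, but `t + (k₀ - 1) b` lies in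
    -- `[c₀ - b, 0) + aℤ`
    rcases hζ i with ⟨hs, hs'⟩ | ⟨-, hs'⟩
    · rw [show ζ i = k₀ - 1 by omega] at hs
      exact notMem_perSet_Ico_of_mem (l₁ := c₀ - b) (r₁ := 0)
        ⟨j, by push_cast; linarith, by push_cast; linarith⟩ le_rfl (by linarith) hs
    · omega
  refine ⟨ζ i, ⟨⟨hlo, hi⟩, i, rfl⟩, ?_⟩
  rintro _ ⟨hm, i', rfl⟩
  rw [mem_Icc] at hm
  rcases lt_trichotomy i' i with h | rfl | h
  · have := hmono.monotone (show i' + 1 ≤ i by omega)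
    have := (hζ i').add_le
    omega
  · rfl
  · have := hmono.monotone (show i + 1 ≤ i' by omega)
    omega

lemma meetsWindowsOnce_range (hab : a < b) (h1 : b - a < c₀) (h2 : c₀ < a)
    (hc : c = q * b + c₀) (hq : 1 ≤ q) (hζ : ∀ i, OrbitStep a b c₀ t q (ζ i) (ζ (i + 1))) :
    MeetsWindowsOnce a b c t (range ζ) := by
  intro j
  have hb : 0 < b := by linarith
  have hmono : StrictMono ζ :=
    strictMono_int_of_lt_succ fun i => by have := (hζ i).add_le; omega
  obtain ⟨k₀, hk₀, -⟩ := existsUnique_add_zsmul_mem_Ico hb (t - j * a) 0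
  rw [zsmul_eq_mul, zero_add, mem_Ico] at hk₀
  rcases lt_or_ge (t - j * a + k₀ * b) c₀ with hu | hu
  · exact existsUnique_mem_window_range_of_lt hb hc (by linarith) hζ hmono hk₀.1 hu
  · exact existsUnique_mem_window_range_of_ge hab h1 hc hζ hmono hu hk₀.2

end Count

theorem mem_S_iff_orbits_avoid_blackholes_general (a b c c₀ : ℝ)
    (hab : a < b) (hbc : b < c)
    (hc0 : c₀ = c - (⌊c / b⌋ : ℝ) * b) (h1 : b - a < c₀) (h2 : c₀ < a) :
    ∀ t : ℝ, t ∈ Sset a b c ↔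
      ∀ n : ℕ,
        (Rmap a b c)^[n] t ∉
          perSet a (Set.Ico (c₀ + a - b) c₀) ∪ perSet a (Set.Ico (c - c₀) (c + b - c₀ - a)) ∧
        (Rtil a b c)^[n] t ∉
          perSet a (Set.Ico (c₀ + a - b) c₀) ∪ perSet a (Set.Ico (c - c₀) (c + b - c₀ - a)) := by
  intro t
  have hb : 0 < b := by linarith
  have hc : c = ⌊c / b⌋ * b + c₀ := by rw [hc0]; ring
  have hq : 1 ≤ ⌊c / b⌋ := Int.le_floor.mpr (by rw [Int.cast_one, le_div_iff₀ hb]; linarith)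
  rw [mem_Sset_iff]
  constructor
  · rintro ⟨P, h0, hP⟩ n
    obtain ⟨k, hk, hRk⟩ := exists_mem_iterate_Rmap hab h1 h2 rfl hc (by omega) hP h0 n
    obtain ⟨k', hk', hTk⟩ := exists_mem_iterate_Rtil hab h1 h2 rfl hc (by omega) hP h0 n
    rw [hRk, hTk]
    exact ⟨add_mul_notMem_blackHoles hab h1 h2 hc (by omega) hP hk,
      add_mul_notMem_blackHoles hab h1 h2 hc (by omega) hP hk'⟩
  · intro h
    obtain ⟨ζ, hζ0, hζ⟩ := exists_orbitStep_seq hab h1 h2 rfl hc h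
    exact ⟨range ζ, ⟨0, hζ0⟩, meetsWindowsOnce_range hab h1 h2 hc hq hζ⟩

/-- Proposition `dabc1pointcharacterization`: with `c₀ = c − ⌊c/b⌋·b` and `b − a < c₀ < a`,
`t ∈ S_{a,b,c}` iff no iterate `(R_{a,b,c})ⁿ(t)` or `(R̃_{a,b,c})ⁿ(t)` (`n ≥ 0`) belongs to
the union of the black holes `[c₀+a−b, c₀) + aℤ` and `[c−c₀, c+b−c₀−a) + aℤ`. -/
theorem mem_S_iff_orbits_avoid_blackholes (a b c c₀ : ℝ)
    (ha : 0 < a) (hab : a < b) (hbc : b < c)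
    (hc0 : c₀ = c - (⌊c / b⌋ : ℝ) * b) (h1 : b - a < c₀) (h2 : c₀ < a) :
    ∀ t : ℝ, t ∈ Sset a b c ↔
      ∀ n : ℕ,
        (Rmap a b c)^[n] t ∉
          perSet a (Set.Ico (c₀ + a - b) c₀) ∪ perSet a (Set.Ico (c - c₀) (c + b - c₀ - a)) ∧
        (Rtil a b c)^[n] t ∉
          perSet a (Set.Ico (c₀ + a - b) c₀) ∪ perSet a (Set.Ico (c - c₀) (c + b - c₀ - a)) :=
  mem_S_iff_orbits_avoid_blackholes_general a b c c₀ hab hbc hc0 h1 h2
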